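/- Let ζ₁, ζ₂ ∈ ℂ with |ζ₁| = |ζ₂| = 1, and let u : ℕ → 𝔻², u_n = (u_n¹, u_n²), be a sequence converging to (ζ₁, ζ₂). Set T₁ := limsup_{n→∞} (1 − |u_n¹|²)/(1 − |u_n²|²) and T₂ := limsup_{n→∞} (1 − |u_n²|²)/(1 − |u_n¹|²), the limsups taken in [0, ∞]. If T₁ > 1 and T₂ > 1, then for every R > 0 the horosphere of u in the bidisc with base point (0,0) satisfies E_{(0,0)}(u, R) = {z₁ ∈ 𝔻 : |ζ₁ − z₁|²/(1 − |z₁|²) < R} × {z₂ ∈ 𝔻 : |ζ₂ − z₂|²/(1 − |z₂|²) < R}. -/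

import Mathlib

/-! In one variable, `ρ(z, w) - ρ(0, w)` converges as `w → ζ ∈ ∂𝔻` to the Julia horofunction
`½ log (|ζ - z|² / (1 - |z|²))`; this follows from the identity
`1 - |(z - w)/(1 - w̄ z)|² = (1 - |z|²)(1 - |w|²)/|1 - w̄ z|²`. In the bidisc the horofunction is
the limsup of `max(a, b) - max(c, d)` with `a - c` and `b - d` converging to the two Julia
horofunctions. The conditions `T₁ > 1` and `T₂ > 1` say that each coordinate of `u n` is
frequently the one farther from the origin, hence frequently realizes `d₂(0, u n)`; along such
`n` the difference of maxima is at least that coordinate's difference. So the limsup is the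
maximum of the two limits and the horosphere is the product of the two disc horospheres. -/

open Filter Set

noncomputable section

/-- The inverse hyperbolic tangent: `artanh r = (1/2) log ((1+r)/(1-r))`. -/
def artanh (r : ℝ) : ℝ := (1 / 2) * Real.log ((1 + r) / (1 - r))

/-- The Poincaré (Kobayashi) distance on the unit disc
`ρ(z,w) = artanh |(z - w)/(1 - conj w * z)|`. -/
def pd (z w : ℂ) : ℝ := artanh (‖(z - w) / (1 - (starRingEnd ℂ) w * z)‖)

/-- The Kobayashi distance of the bidisc. -/
def kd2 (z w : ℂ × ℂ) : ℝ := max (pd z.1 w.1) (pd z.2 w.2)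

/-- The open unit bidisc. -/
def bidisc : Set (ℂ × ℂ) := {z : ℂ × ℂ | ‖z.1‖ < 1 ∧ ‖z.2‖ < 1}

/-- The horosphere in the bidisc of a sequence `u` with respect to base point `x`
and radius `R`. -/
def biE (x : ℂ × ℂ) (u : ℕ → ℂ × ℂ) (R : ℝ) : Set (ℂ × ℂ) :=
  {z : ℂ × ℂ | z ∈ bidisc ∧
    Filter.limsup (fun n => kd2 z (u n) - kd2 x (u n)) Filter.atTop < (1 / 2) * Real.log R}

open Topology

theorem one_sub_sq_norm_pos {E : Type*} [SeminormedAddGroup E] {x : E} (hx : ‖x‖ < 1) :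
    0 < 1 - ‖x‖ ^ 2 :=
  sub_pos.2 (pow_lt_one₀ (norm_nonneg x) hx two_ne_zero)

section Limsup

variable {ι : Type*} {l : Filter ι}

theorem le_limsup_of_frequently_le_of_tendsto {α : Type*} [ConditionallyCompleteLinearOrder α]
    [TopologicalSpace α] [OrderTopology α] [DenselyOrdered α] {e g : ι → α} {a : α}
    (he : Tendsto e l (𝓝 a)) (hfreq : ∃ᶠ i in l, e i ≤ g i)
    (hg : IsBoundedUnder (· ≤ ·) l g := by isBoundedDefault) : a ≤ limsup g l :=
  le_of_forall_lt_imp_le_of_dense fun _ hx => le_limsup_of_frequently_le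
    ((hfreq.and_eventually (he.eventually (lt_mem_nhds hx))).mono fun _ h => h.2.le.trans h.1) hg

theorem min_sub_le_max_sub_max {α : Type*} [AddCommGroup α] [LinearOrder α]
    [IsOrderedAddMonoid α] (a b c d : α) : min (a - c) (b - d) ≤ max a b - max c d := by
  grind

theorem limsup_max_sub_max {a b c d : ι → ℝ} {α β : ℝ}
    (hac : Tendsto (fun i => a i - c i) l (𝓝 α)) (hbd : Tendsto (fun i => b i - d i) l (𝓝 β))
    (hc : ∃ᶠ i in l, d i ≤ c i) (hd : ∃ᶠ i in l, c i ≤ d i) :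
    limsup (fun i => max (a i) (b i) - max (c i) (d i)) l = max α β := by
  have : l.NeBot := (frequently_true_iff_neBot l).1 (hc.mono fun _ _ => trivial)
  have hmax := hac.max hbd
  have hbdd : IsBoundedUnder (· ≤ ·) l fun i => max (a i) (b i) - max (c i) (d i) :=
    hmax.isBoundedUnder_le.mono_le (.of_forall fun i => max_sub_max_le_max _ _ _ _)
  have hcobdd : IsCoboundedUnder (· ≤ ·) l fun i => max (a i) (b i) - max (c i) (d i) :=
    ((hac.min hbd).isBoundedUnder_ge.mono_ge
      (.of_forall fun i => min_sub_le_max_sub_max _ _ _ _)).isCoboundedUnder_le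
  refine le_antisymm ?_ (max_le ?_ ?_)
  · exact hmax.limsup_eq ▸ limsup_le_limsup (.of_forall fun i => max_sub_max_le_max _ _ _ _)
      hcobdd hmax.isBoundedUnder_le
  · refine le_limsup_of_frequently_le_of_tendsto hac (hc.mono fun i hi => ?_) hbdd
    rw [max_eq_left hi]
    exact sub_le_sub_right (le_max_left _ _) _
  · refine le_limsup_of_frequently_le_of_tendsto hbd (hd.mono fun i hi => ?_) hbdd
    rw [max_eq_right hi]
    exact sub_le_sub_right (le_max_right _ _) _

theorem frequently_lt_of_one_lt_limsup_ofReal_div {a b : ι → ℝ} (hb : ∀ i, 0 < b i)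
    (h : 1 < limsup (fun i => ENNReal.ofReal (a i / b i)) l) : ∃ᶠ i in l, b i < a i :=
  (frequently_lt_of_lt_limsup (by isBoundedDefault) h).mono fun i hi => by
    rwa [ENNReal.one_lt_ofReal, one_lt_div (hb i)] at hi

end Limsup

section PoincareDisc

open Complex ComplexConjugate

theorem norm_one_sub_conj_mul_sq_sub_norm_sub_sq (z w : ℂ) :
    ‖1 - conj w * z‖ ^ 2 - ‖z - w‖ ^ 2 = (1 - ‖z‖ ^ 2) * (1 - ‖w‖ ^ 2) := by
  simp only [Complex.sq_norm, normSq_apply, sub_re, sub_im, mul_re, mul_im, one_re, one_im,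
    conj_re, conj_im]
  ring

theorem one_sub_conj_mul_ne_zero {z w : ℂ} (hz : ‖z‖ < 1) (hw : ‖w‖ ≤ 1) :
    1 - conj w * z ≠ 0 := by
  refine sub_ne_zero.2 fun h => ?_
  have : ‖conj w * z‖ < 1 := by
    rw [norm_mul, norm_conj]
    exact mul_lt_one_of_nonneg_of_lt_one_right hw (norm_nonneg z) hz
  simp [← h] at this

theorem norm_one_sub_conj_mul_of_norm_eq_one {ζ : ℂ} (hζ : ‖ζ‖ = 1) (z : ℂ) :
    ‖1 - conj ζ * z‖ = ‖ζ - z‖ := by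
  have : 1 - conj ζ * z = conj ζ * (ζ - z) := by
    rw [mul_sub, conj_mul', hζ]; norm_num
  rw [this, norm_mul, norm_conj, hζ, one_mul]

theorem norm_div_eq_one_of_norm_eq_one {ζ z : ℂ} (hζ : ‖ζ‖ = 1) (hz : ‖z‖ < 1) :
    ‖(z - ζ) / (1 - conj ζ * z)‖ = 1 := by
  have : 0 < ‖ζ - z‖ := (sub_pos.2 (hζ ▸ hz)).trans_le (norm_sub_norm_le ζ z)
  rw [norm_div, norm_one_sub_conj_mul_of_norm_eq_one hζ, norm_sub_rev, div_self this.ne']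

theorem one_sub_norm_div_sq {z w : ℂ} (hz : ‖z‖ < 1) (hw : ‖w‖ ≤ 1) :
    1 - ‖(z - w) / (1 - conj w * z)‖ ^ 2
      = (1 - ‖z‖ ^ 2) * (1 - ‖w‖ ^ 2) / ‖1 - conj w * z‖ ^ 2 := by
  have hD : ‖1 - conj w * z‖ ≠ 0 := norm_ne_zero_iff.2 (one_sub_conj_mul_ne_zero hz hw)
  rw [norm_div, div_pow, ← norm_one_sub_conj_mul_sq_sub_norm_sub_sq, sub_div,
    div_self (pow_ne_zero 2 hD)]

theorem norm_div_lt_one {z w : ℂ} (hz : ‖z‖ < 1) (hw : ‖w‖ < 1) :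
    ‖(z - w) / (1 - conj w * z)‖ < 1 := by
  have hD := norm_pos_iff.2 (one_sub_conj_mul_ne_zero hz hw.le)
  have := one_sub_sq_norm_pos hz
  have := one_sub_sq_norm_pos hw
  have : 0 < 1 - ‖(z - w) / (1 - conj w * z)‖ ^ 2 := by
    rw [one_sub_norm_div_sq hz hw.le]
    positivity
  exact (sq_lt_one_iff₀ (norm_nonneg _)).1 (sub_pos.1 this)

theorem artanh_eq_real_artanh {x : ℝ} (hx : x ∈ Icc (-1) 1) : artanh x = Real.artanh x :=
  (Real.artanh_eq_half_log hx).symm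

theorem pd_zero_left (w : ℂ) : pd 0 w = artanh ‖w‖ := by
  simp [pd]

theorem pd_zero_left_le {w w' : ℂ} (hw' : ‖w'‖ < 1) (h : ‖w‖ ≤ ‖w'‖) : pd 0 w ≤ pd 0 w' := by
  have hw : -1 < ‖w‖ := by linarith [norm_nonneg w]
  rw [pd_zero_left, pd_zero_left, artanh_eq_real_artanh ⟨hw.le, h.trans hw'.le⟩,
    artanh_eq_real_artanh ⟨by linarith, hw'.le⟩]
  exact Real.artanh_le_artanh hw hw' h

theorem pd_sub_pd_zero_left {z w : ℂ} (hz : ‖z‖ < 1) (hw : ‖w‖ < 1) :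
    pd z w - pd 0 w = 1 / 2 * Real.log ((1 + ‖(z - w) / (1 - conj w * z)‖) ^ 2
      * ‖1 - conj w * z‖ ^ 2 / ((1 - ‖z‖ ^ 2) * (1 + ‖w‖) ^ 2)) := by
  set t := ‖(z - w) / (1 - conj w * z)‖
  set D := ‖1 - conj w * z‖
  have hD : 0 < D := norm_pos_iff.2 (one_sub_conj_mul_ne_zero hz hw.le)
  have ht : t < 1 := norm_div_lt_one hz hw
  have : 0 < 1 - ‖z‖ ^ 2 := one_sub_sq_norm_pos hz
  have hkey : (1 - t ^ 2) * D ^ 2 = (1 - ‖z‖ ^ 2) * (1 - ‖w‖ ^ 2) := by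
    rw [one_sub_norm_div_sq hz hw.le, div_mul_cancel₀ _ (pow_ne_zero 2 hD.ne')]
  have : 0 < 1 - t := sub_pos.2 ht
  have : 0 < 1 - ‖w‖ := sub_pos.2 hw
  have : 0 ≤ t := norm_nonneg _
  -- `(1 + t)/(1 - t) = (1 + t)²/(1 - t²)` and `hkey` evaluates `1 - t²`.
  rw [pd, pd_zero_left, artanh, artanh, ← mul_sub,
    ← Real.log_div (by positivity) (by positivity)]
  congr 2
  rw [div_div_div_eq, div_eq_div_iff (by positivity) (by positivity)]
  linear_combination (-(1 + t) * (1 + ‖w‖)) * hkey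

theorem sq_norm_sub_div_pos {ζ z : ℂ} (hζ : ‖ζ‖ = 1) (hz : ‖z‖ < 1) :
    0 < ‖ζ - z‖ ^ 2 / (1 - ‖z‖ ^ 2) := by
  have : 0 < ‖ζ - z‖ := (sub_pos.2 (hζ ▸ hz)).trans_le (norm_sub_norm_le ζ z)
  have : 0 < 1 - ‖z‖ ^ 2 := one_sub_sq_norm_pos hz
  positivity

theorem tendsto_pd_sub_pd_zero_left {ι : Type*} {l : Filter ι} {ζ z : ℂ} (hζ : ‖ζ‖ = 1)
    (hz : ‖z‖ < 1) {v : ι → ℂ} (hv : ∀ i, ‖v i‖ < 1) (hlim : Tendsto v l (𝓝 ζ)) :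
    Tendsto (fun i => pd z (v i) - pd 0 (v i)) l
      (𝓝 (1 / 2 * Real.log (‖ζ - z‖ ^ 2 / (1 - ‖z‖ ^ 2)))) := by
  have hden : 1 - conj ζ * z ≠ 0 := one_sub_conj_mul_ne_zero hz hζ.le
  have hz' : 0 < 1 - ‖z‖ ^ 2 := one_sub_sq_norm_pos hz
  set F : ℂ → ℝ := fun w => (1 + ‖(z - w) / (1 - conj w * z)‖) ^ 2
      * ‖1 - conj w * z‖ ^ 2 / ((1 - ‖z‖ ^ 2) * (1 + ‖w‖) ^ 2)
  have hFζ : F ζ = ‖ζ - z‖ ^ 2 / (1 - ‖z‖ ^ 2) := by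
    simp only [F, norm_div_eq_one_of_norm_eq_one hζ hz, norm_one_sub_conj_mul_of_norm_eq_one hζ, hζ]
    field_simp
  have hF : ContinuousAt F ζ := by
    have : (1 - ‖z‖ ^ 2) * (1 + ‖ζ‖) ^ 2 ≠ 0 := mul_ne_zero hz'.ne' (by positivity)
    have := Complex.continuous_conj
    fun_prop (disch := assumption)
  have hlog :=
    ((hF.log (hFζ ▸ (sq_norm_sub_div_pos hζ hz).ne')).tendsto.comp hlim).const_mul (1 / 2)
  rw [hFζ] at hlog
  exact hlog.congr fun i => (pd_sub_pd_zero_left hz (hv i)).symm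

end PoincareDisc

theorem frequently_pd_zero_left_le {ι : Type*} {l : Filter ι} {x y : ι → ℂ}
    (hx : ∀ i, ‖x i‖ < 1)
    (h : 1 < limsup (fun i => ENNReal.ofReal ((1 - ‖y i‖ ^ 2) / (1 - ‖x i‖ ^ 2))) l) :
    ∃ᶠ i in l, pd 0 (y i) ≤ pd 0 (x i) := by
  refine (frequently_lt_of_one_lt_limsup_ofReal_div (fun i => one_sub_sq_norm_pos (hx i)) h).mono
    fun i hi => pd_zero_left_le (hx i) ?_
  exact (pow_le_pow_iff_left₀ (norm_nonneg _) (norm_nonneg _) two_ne_zero).1 (by linarith)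

theorem biE_of_corner_point (ζ₁ ζ₂ : ℂ) (hζ₁ : ‖ζ₁‖ = 1) (hζ₂ : ‖ζ₂‖ = 1)
    (u : ℕ → ℂ × ℂ) (hu : ∀ n, u n ∈ bidisc)
    (hconv : Filter.Tendsto u Filter.atTop (nhds (ζ₁, ζ₂)))
    (hT₁ : 1 < Filter.limsup (fun n =>
      ENNReal.ofReal ((1 - (‖(u n).1‖) ^ 2) / (1 - (‖(u n).2‖) ^ 2)))
      Filter.atTop)
    (hT₂ : 1 < Filter.limsup (fun n =>
      ENNReal.ofReal ((1 - (‖(u n).2‖) ^ 2) / (1 - (‖(u n).1‖) ^ 2)))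
      Filter.atTop) :
    ∀ R > (0 : ℝ), biE ((0 : ℂ), (0 : ℂ)) u R =
      {z₁ : ℂ | ‖z₁‖ < 1 ∧
        (‖ζ₁ - z₁‖) ^ 2 / (1 - (‖z₁‖) ^ 2) < R} ×ˢ
      {z₂ : ℂ | ‖z₂‖ < 1 ∧
        (‖ζ₂ - z₂‖) ^ 2 / (1 - (‖z₂‖) ^ 2) < R} := by
  intro R hR
  have hlimsup : ∀ z ∈ bidisc, limsup (fun n => kd2 z (u n) - kd2 (0, 0) (u n)) atTop
      = max (1 / 2 * Real.log (‖ζ₁ - z.1‖ ^ 2 / (1 - ‖z.1‖ ^ 2)))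
        (1 / 2 * Real.log (‖ζ₂ - z.2‖ ^ 2 / (1 - ‖z.2‖ ^ 2))) := fun z hz =>
    limsup_max_sub_max
      (tendsto_pd_sub_pd_zero_left hζ₁ hz.1 (fun n => (hu n).1) hconv.fst_nhds)
      (tendsto_pd_sub_pd_zero_left hζ₂ hz.2 (fun n => (hu n).2) hconv.snd_nhds)
      (frequently_pd_zero_left_le (fun n => (hu n).1) hT₂)
      (frequently_pd_zero_left_le (fun n => (hu n).2) hT₁)
  have hlog_lt : ∀ {ζ z : ℂ}, ‖ζ‖ = 1 → ‖z‖ < 1 →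
      (1 / 2 * Real.log (‖ζ - z‖ ^ 2 / (1 - ‖z‖ ^ 2)) < 1 / 2 * Real.log R
        ↔ ‖ζ - z‖ ^ 2 / (1 - ‖z‖ ^ 2) < R) := fun hζ hz => by
    rw [mul_lt_mul_iff_right₀ one_half_pos, Real.log_lt_log_iff (sq_norm_sub_div_pos hζ hz) hR]
  ext z
  simp only [biE, mem_ofPred_eq, mem_prod]
  rw [and_and_and_comm]
  exact and_congr_right fun hz => by
    rw [hlimsup z hz, max_lt_iff, hlog_lt hζ₁ hz.1, hlog_lt hζ₂ hz.2]
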